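/- Let the singular value thresholding operator be defined for a matrix A with SVD A = UΣVᵀ and τ > 0 by S_τ(A) = U·diag(max(σ_i − τ, 0))·Vᵀ. Then S_τ(A) is the unique minimizer of the function M ↦ τ‖M‖_* + (1/2)‖M − A‖_F² over all matrices M of the same size. -/

import Mathlib

open Matrix
/-- The nuclear norm of a real matrix: the sum of its singular values. -/
noncomputable def nuclearNorm {m n : Type*} [Fintype m] [Fintype n] [DecidableEq n]
    (A : Matrix m n ℝ) : ℝ :=
  ∑ i, Real.sqrt ((Matrix.posSemidef_conjTranspose_mul_self A).isHermitian.eigenvalues i)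

/-!
Let `X = A - S = U · diag(min(σᵢ, τ)) · Vᵀ`. Its singular values are at most `τ`, i.e.
`XᵀX ≤ τ²` in the Loewner order, which gives `⟨X, M⟩ ≤ τ‖M‖_*` for every `M`: rotate `M` by the
eigenvectors of `MᵀM`, whose columns then have norms the singular values of `M`, and apply
Cauchy–Schwarz column by column. On the other hand `⟨X, S⟩ = τ‖S‖_*`, because
`min(σ, τ) · max(σ - τ, 0) = τ · max(σ - τ, 0)`. So `X` is a subgradient of `τ‖·‖_*` at `S`, and
expanding `‖M - A‖²` around `S` shows that the objective at `M` exceeds its value at `S` by at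
least `‖M - S‖² / 2`.
-/

namespace Matrix

variable {m n : Type*} [Fintype m]

lemma transpose_mul_self_apply_self (Y : Matrix m n ℝ) (k : n) :
    (Yᵀ * Y) k k = ∑ i, Y i k ^ 2 := by
  simp only [mul_apply, transpose_apply, sq]

variable [Fintype n]

lemma sum_sum_mul_eq_trace (X M : Matrix m n ℝ) :
    ∑ i, ∑ j, X i j * M i j = trace (Xᵀ * M) := by
  simp only [trace, diag, mul_apply, transpose_apply]
  exact Finset.sum_comm

lemma transpose_mul_transpose_mul_of_orthogonal {k : Type*} [Fintype k] [DecidableEq m]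
    {U : Matrix m m ℝ} (hU : Uᵀ * U = 1) (D D' : Matrix m n ℝ) (V : Matrix k n ℝ) :
    (U * D * Vᵀ)ᵀ * (U * D' * Vᵀ) = V * (Dᵀ * D') * Vᵀ := by
  simp only [transpose_mul, transpose_transpose, Matrix.mul_assoc]
  rw [← Matrix.mul_assoc Uᵀ U, hU, Matrix.one_mul]

variable [DecidableEq n]

lemma sum_sum_mul_eq_of_orthogonal_right {W : Matrix n n ℝ} (hW : W * Wᵀ = 1)
    (X M : Matrix m n ℝ) :
    ∑ i, ∑ k, (X * W) i k * (M * W) i k = ∑ i, ∑ j, X i j * M i j := by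
  rw [sum_sum_mul_eq_trace, sum_sum_mul_eq_trace, transpose_mul, Matrix.mul_assoc,
    trace_mul_comm]
  simp only [Matrix.mul_assoc, hW, Matrix.mul_one]

lemma IsHermitian.exists_orthogonal_conj_eq_diagonal {B : Matrix n n ℝ} (hB : B.IsHermitian) :
    ∃ W : Matrix n n ℝ, Wᵀ * W = 1 ∧ W * Wᵀ = 1 ∧ Wᵀ * B * W = diagonal hB.eigenvalues := by
  have hstar : star (hB.eigenvectorUnitary : Matrix n n ℝ) = (hB.eigenvectorUnitary)ᵀ := by
    rw [star_eq_conjTranspose, conjTranspose_eq_transpose_of_trivial]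
  refine ⟨hB.eigenvectorUnitary, ?_, ?_, ?_⟩
  · rw [← hstar, Unitary.coe_star_mul_self]
  · rw [← hstar, Unitary.mul_star_self_of_mem hB.eigenvectorUnitary.2]
  · simpa [star_eq_conjTranspose] using hB.conjStarAlgAut_star_eigenvectorUnitary

lemma IsHermitian.sum_comp_eigenvalues_of_eq_conj_diagonal {B : Matrix n n ℝ}
    (hB : B.IsHermitian) {P : Matrix n n ℝ} (hP : Pᵀ * P = 1) {g : n → ℝ}
    (hBP : B = P * diagonal g * Pᵀ) (f : ℝ → ℝ) :
    ∑ i, f (hB.eigenvalues i) = ∑ j, f (g j) := by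
  have hchar : B.charpoly = (diagonal g).charpoly := by
    rw [hBP, charpoly_mul_comm, ← Matrix.mul_assoc, hP, Matrix.one_mul]
  have hroots : Finset.univ.val.map hB.eigenvalues = Finset.univ.val.map g := by
    have h := hB.roots_charpoly_eq_eigenvalues
    rw [hchar, charpoly_diagonal] at h
    simpa [h] using Polynomial.roots_multiset_prod_X_sub_C (Finset.univ.val.map g)
  simpa using congrArg (fun s => (s.map f).sum) hroots

lemma sum_sq_mul_apply_le_of_posSemidef {τ : ℝ} {X : Matrix m n ℝ}
    (hX : (τ ^ 2 • 1 - Xᵀ * X).PosSemidef) {W : Matrix n n ℝ} (hW : Wᵀ * W = 1) (k : n) : ∑ i, (X * W) i k ^ 2 ≤ τ ^ 2 := by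
  have hconj : Wᵀ * (τ ^ 2 • 1 - Xᵀ * X) * W = τ ^ 2 • 1 - (X * W)ᵀ * (X * W) := by
    simp only [Matrix.mul_sub, Matrix.sub_mul, Matrix.mul_smul, Matrix.smul_mul, Matrix.mul_one,
      hW, transpose_mul, Matrix.mul_assoc]
  have h := (hX.conjTranspose_mul_mul_same W).diag_nonneg (i := k)
  rw [conjTranspose_eq_transpose_of_trivial, hconj, sub_apply, smul_apply, one_apply_eq,
    transpose_mul_self_apply_self] at h
  simpa using h

end Matrix

section NuclearNorm

variable {m n : Type*} [Fintype m] [Fintype n] [DecidableEq n]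

lemma nuclearNorm_eq_sum_sqrt_of_transpose_mul_self_eq (N : Matrix m n ℝ) {P : Matrix n n ℝ}
    (hP : Pᵀ * P = 1) {g : n → ℝ} (hN : Nᵀ * N = P * diagonal g * Pᵀ) :
    nuclearNorm N = ∑ j, √(g j) :=
  (posSemidef_conjTranspose_mul_self N).isHermitian.sum_comp_eigenvalues_of_eq_conj_diagonal hP
    (by rwa [conjTranspose_eq_transpose_of_trivial]) Real.sqrt

theorem sum_sum_mul_le_mul_nuclearNorm {τ : ℝ} (hτ : 0 ≤ τ) {X : Matrix m n ℝ}
    (hX : (τ ^ 2 • 1 - Xᵀ * X).PosSemidef) (M : Matrix m n ℝ) :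
    ∑ i, ∑ j, X i j * M i j ≤ τ * nuclearNorm M := by
  have hMM := (posSemidef_conjTranspose_mul_self M).isHermitian
  obtain ⟨W, hW, hW', hdiag⟩ := hMM.exists_orthogonal_conj_eq_diagonal
  have hcolM (k : n) : ∑ i, (M * W) i k ^ 2 = hMM.eigenvalues k := by
    rw [← transpose_mul_self_apply_self, transpose_mul, Matrix.mul_assoc, ← Matrix.mul_assoc Mᵀ,
      ← Matrix.mul_assoc, ← conjTranspose_eq_transpose_of_trivial M, hdiag, diagonal_apply_eq]
  rw [← sum_sum_mul_eq_of_orthogonal_right hW', Finset.sum_comm, nuclearNorm,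
    Finset.mul_sum]
  refine Finset.sum_le_sum fun k _ => ?_
  calc ∑ i, (X * W) i k * (M * W) i k
      ≤ √(∑ i, (X * W) i k ^ 2) * √(∑ i, (M * W) i k ^ 2) := Real.sum_mul_le_sqrt_mul_sqrt _ _ _
    _ ≤ τ * √(hMM.eigenvalues k) := by
      rw [hcolM]
      gcongr
      exact (Real.sqrt_le_sqrt (sum_sq_mul_apply_le_of_posSemidef hX hW k)).trans_eq
        (Real.sqrt_sq hτ)

end NuclearNorm

theorem add_half_sum_sq_lt_of_dual_certificate {m n : Type*} [Fintype m] [Fintype n]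
    (N : Matrix m n ℝ → ℝ) {τ : ℝ} {A S M : Matrix m n ℝ}
    (hS : ∑ i, ∑ j, (A - S) i j * S i j = τ * N S)
    (hM : ∑ i, ∑ j, (A - S) i j * M i j ≤ τ * N M) (hne : M ≠ S) :
    τ * N S + 1 / 2 * ∑ i, ∑ j, (S i j - A i j) ^ 2 <
      τ * N M + 1 / 2 * ∑ i, ∑ j, (M i j - A i j) ^ 2 := by
  have hexpand : ∑ i, ∑ j, (M i j - A i j) ^ 2 = ∑ i, ∑ j, (M i j - S i j) ^ 2
      - 2 * ∑ i, ∑ j, (A - S) i j * M i j + 2 * ∑ i, ∑ j, (A - S) i j * S i j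
      + ∑ i, ∑ j, (S i j - A i j) ^ 2 := by
    simp only [Matrix.sub_apply, Finset.mul_sum, ← Finset.sum_add_distrib,
      ← Finset.sum_sub_distrib]
    refine Finset.sum_congr rfl fun i _ => Finset.sum_congr rfl fun j _ => ?_
    ring
  have hpos : 0 < ∑ i, ∑ j, (M i j - S i j) ^ 2 := by
    obtain ⟨i, j, hij⟩ : ∃ i j, M i j ≠ S i j := by
      by_contra! h
      exact hne (Matrix.ext h)
    refine Finset.sum_pos' (fun i _ => Finset.sum_nonneg fun j _ => sq_nonneg _)
      ⟨i, Finset.mem_univ _, Finset.sum_pos' (fun j _ => sq_nonneg _)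
        ⟨j, Finset.mem_univ _, by positivity [sub_ne_zero.mpr hij]⟩⟩
  linarith

section Thresholding

variable {R : Type*} [Ring R] [LinearOrder R] [IsOrderedRing R]

lemma sub_max_sub_zero_eq_min (a b : R) : a - max (a - b) 0 = min a b := by
  rcases le_total a b with h | h
  · rw [max_eq_right (sub_nonpos.mpr h), min_eq_left h, sub_zero]
  · rw [max_eq_left (sub_nonneg.mpr h), min_eq_right h, sub_sub_cancel]

lemma min_mul_max_sub_zero (a b : R) : min a b * max (a - b) 0 = b * max (a - b) 0 := by
  rcases le_total a b with h | h
  · rw [max_eq_right (sub_nonpos.mpr h), mul_zero, mul_zero]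
  · rw [min_eq_right h]

end Thresholding

def rectDiagonal (m n : ℕ) (f : ℕ → ℝ) : Matrix (Fin m) (Fin n) ℝ :=
  of fun i j => if (i : ℕ) = j then f i else 0

section RectDiagonal

variable {m n : ℕ}

lemma rectDiagonal_sub (f g : ℕ → ℝ) :
    rectDiagonal m n f - rectDiagonal m n g = rectDiagonal m n (f - g) := by
  ext i j
  simp only [rectDiagonal, Matrix.sub_apply, of_apply, Pi.sub_apply]
  split_ifs <;> simp

lemma transpose_rectDiagonal_mul_rectDiagonal (f g : ℕ → ℝ) :
    (rectDiagonal m n f)ᵀ * rectDiagonal m n g =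
      diagonal fun j : Fin n => if (j : ℕ) < m then f j * g j else 0 := by
  ext j j'
  simp only [rectDiagonal, mul_apply, transpose_apply, of_apply, diagonal_apply]
  rw [Fin.sum_univ_eq_sum_range
    (fun k => (if k = (j : ℕ) then f k else 0) * (if k = (j' : ℕ) then g k else 0)) m]
  simp only [ite_mul, zero_mul, Finset.sum_ite_eq', Finset.mem_range, Fin.ext_iff]
  split_ifs <;> simp_all

end RectDiagonal

section SVD

variable {m n : ℕ} {U : Matrix (Fin m) (Fin m) ℝ} {V : Matrix (Fin n) (Fin n) ℝ}

lemma nuclearNorm_svd (hU : Uᵀ * U = 1) (hV : Vᵀ * V = 1) {f : ℕ → ℝ} (hf : ∀ i, 0 ≤ f i) :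
    nuclearNorm (U * rectDiagonal m n f * Vᵀ) = ∑ j : Fin n, if (j : ℕ) < m then f j else 0 := by
  rw [nuclearNorm_eq_sum_sqrt_of_transpose_mul_self_eq _ hV
    (by rw [transpose_mul_transpose_mul_of_orthogonal hU,
      transpose_rectDiagonal_mul_rectDiagonal])]
  refine Finset.sum_congr rfl fun j _ => ?_
  split_ifs
  · exact Real.sqrt_mul_self (hf j)
  · exact Real.sqrt_zero

lemma sum_sum_svd_mul_svd (hU : Uᵀ * U = 1) (hV : Vᵀ * V = 1) (f g : ℕ → ℝ) :
    ∑ i, ∑ j, (U * rectDiagonal m n f * Vᵀ) i j * (U * rectDiagonal m n g * Vᵀ) i j =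
      ∑ j : Fin n, if (j : ℕ) < m then f j * g j else 0 := by
  rw [sum_sum_mul_eq_trace, transpose_mul_transpose_mul_of_orthogonal hU, trace_mul_cycle, hV,
    Matrix.one_mul, transpose_rectDiagonal_mul_rectDiagonal, trace_diagonal]

lemma posSemidef_sq_smul_one_sub_transpose_svd_mul_svd (hU : Uᵀ * U = 1) (hV : V * Vᵀ = 1)
    {τ : ℝ} {f : ℕ → ℝ} (hf : ∀ i, |f i| ≤ τ) :
    (τ ^ 2 • 1 - (U * rectDiagonal m n f * Vᵀ)ᵀ * (U * rectDiagonal m n f * Vᵀ)).PosSemidef := by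
  set e : Fin n → ℝ := fun j => if (j : ℕ) < m then f j * f j else 0
  have he (j : Fin n) : e j ≤ τ ^ 2 := by
    simp only [e]
    split_ifs
    · nlinarith [abs_le.mp (hf j)]
    · positivity
  have hconj : τ ^ 2 • 1 - V * diagonal e * Vᵀ = V * diagonal (fun j => τ ^ 2 - e j) * Vᵀ := by
    have hdiag : diagonal (fun j => τ ^ 2 - e j) = τ ^ 2 • 1 - diagonal e := by
      rw [smul_one_eq_diagonal, diagonal_sub]
    rw [hdiag, Matrix.mul_sub, Matrix.sub_mul, Matrix.mul_smul, Matrix.mul_one, Matrix.smul_mul,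
      hV]
  rw [transpose_mul_transpose_mul_of_orthogonal hU, transpose_rectDiagonal_mul_rectDiagonal, hconj]
  simpa using
    (posSemidef_diagonal_iff.mpr fun j => sub_nonneg.mpr (he j)).mul_mul_conjTranspose_same V

end SVD

/-- **Singular value thresholding solves the nuclear-norm proximal problem**:
if `A = U Σ Vᵀ` is an SVD of `A` (with `U`, `V` orthogonal and `Σ` rectangular
diagonal with nonnegative entries `σ`), then
`S_τ(A) = U · diag(max(σ_i − τ, 0)) · Vᵀ` is the unique minimizer of
`M ↦ τ‖M‖_* + (1/2)‖M − A‖_F²`. -/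
theorem svt_is_unique_minimizer (m n : ℕ) (τ : ℝ) (hτ : 0 < τ)
    (A : Matrix (Fin m) (Fin n) ℝ)
    (U : Matrix (Fin m) (Fin m) ℝ) (V : Matrix (Fin n) (Fin n) ℝ)
    (hU : Uᵀ * U = 1) (hV : Vᵀ * V = 1)
    (σ : ℕ → ℝ) (hσ : ∀ i, 0 ≤ σ i)
    (hSVD : A = U * (Matrix.of fun (i : Fin m) (j : Fin n) =>
      if (i : ℕ) = (j : ℕ) then σ (i : ℕ) else 0) * Vᵀ)
    (S : Matrix (Fin m) (Fin n) ℝ)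
    (hS : S = U * (Matrix.of fun (i : Fin m) (j : Fin n) =>
      if (i : ℕ) = (j : ℕ) then max (σ (i : ℕ) - τ) 0 else 0) * Vᵀ) :
    ∀ M : Matrix (Fin m) (Fin n) ℝ, M ≠ S →
      τ * nuclearNorm S + (1 / 2) * (∑ i, ∑ j, (S i j - A i j) ^ 2) <
        τ * nuclearNorm M + (1 / 2) * (∑ i, ∑ j, (M i j - A i j) ^ 2) := by
  intro M hM
  change A = U * rectDiagonal m n σ * Vᵀ at hSVD
  change S = U * rectDiagonal m n (fun i => max (σ i - τ) 0) * Vᵀ at hS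
  have hres : A - S = U * rectDiagonal m n (fun i => min (σ i) τ) * Vᵀ := by
    rw [hSVD, hS, ← Matrix.sub_mul, ← Matrix.mul_sub, rectDiagonal_sub]
    congr
    funext i
    exact sub_max_sub_zero_eq_min (σ i) τ
  refine add_half_sum_sq_lt_of_dual_certificate nuclearNorm ?_ ?_ hM
  · rw [hres, hS, sum_sum_svd_mul_svd hU hV, nuclearNorm_svd hU hV fun i => le_max_right _ _,
      Finset.mul_sum]
    refine Finset.sum_congr rfl fun j _ => ?_
    split_ifs
    · exact min_mul_max_sub_zero (σ j) τ
    · rw [mul_zero]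
  · rw [hres]
    refine sum_sum_mul_le_mul_nuclearNorm hτ.le
      (posSemidef_sq_smul_one_sub_transpose_svd_mul_svd hU (mul_eq_one_comm.mp hV) ?_) M
    intro i
    rw [abs_of_nonneg (le_min (hσ i) hτ.le)]
    exact min_le_right _ _
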